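/- A 3×3 Hermitian matrix ρ = (1/3)𝟙 + (1/2)(x λ₁ + y λ₄ + z λ₆), where λ₁, λ₄, λ₆ are the symmetric off-diagonal Gell-Mann matrices, is positive semidefinite if and only if x² + y² + z² − 3xyz ≤ 4/9 and x² + y² + z² ≤ 4/3. -/

import Mathlib

/-!
The eigenvalues of a real symmetric 3 × 3 matrix are the roots of its characteristic polynomial
`t³ - e₁ t² + e₂ t - e₃`, where `e₁` is the trace, `e₂` the sum of the principal 2 × 2 minors and
`e₃` the determinant. These are all nonnegative for a positive semidefinite matrix, and conversely,
if they are, a negative `t` makes every term of the cubic nonpositive and `t³` negative, so no root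
is negative. For `ρ` one computes `e₁ = 1`, `e₂ = (4/3 - (x² + y² + z²)) / 4` and
`e₃ = (4/9 - (x² + y² + z² - 3xyz)) / 12`.
-/

open Matrix

def lam1 : Matrix (Fin 3) (Fin 3) ℝ := !![0, 1, 0; 1, 0, 0; 0, 0, 0]
def lam4 : Matrix (Fin 3) (Fin 3) ℝ := !![0, 0, 1; 0, 0, 0; 1, 0, 0]
def lam6 : Matrix (Fin 3) (Fin 3) ℝ := !![0, 0, 0; 0, 0, 1; 0, 1, 0]

namespace Matrix

def sumPrincipalMinorsTwo {R : Type*} [CommRing R] (A : Matrix (Fin 3) (Fin 3) R) : R :=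
  A 0 0 * A 1 1 - A 0 1 * A 1 0 + A 0 0 * A 2 2 - A 0 2 * A 2 0 + A 1 1 * A 2 2 - A 1 2 * A 2 1

theorem eval_charpoly_fin_three {R : Type*} [CommRing R] (A : Matrix (Fin 3) (Fin 3) R) (t : R) :
    A.charpoly.eval t = t ^ 3 - A.trace * t ^ 2 + A.sumPrincipalMinorsTwo * t - A.det := by
  rw [eval_charpoly, det_fin_three, det_fin_three, trace_fin_three, sumPrincipalMinorsTwo]
  simp only [sub_apply, scalar_apply, diagonal_apply_eq, diagonal_apply_ne, ne_eq, Fin.reduceEq,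
    not_false_eq_true]
  ring

theorem PosSemidef.sumPrincipalMinorsTwo_nonneg {A : Matrix (Fin 3) (Fin 3) ℝ} (hA : A.PosSemidef) :
    0 ≤ A.sumPrincipalMinorsTwo := by
  have minor_nonneg (i j : Fin 3) : 0 ≤ A i i * A j j - A i j * A j i := by
    have h := (hA.submatrix ![i, j]).det_nonneg
    rw [det_fin_two] at h
    simpa using h
  have h01 := minor_nonneg 0 1
  have h02 := minor_nonneg 0 2
  have h12 := minor_nonneg 1 2
  rw [sumPrincipalMinorsTwo]
  linarith

theorem IsHermitian.posSemidef_iff_fin_three {A : Matrix (Fin 3) (Fin 3) ℝ} (hA : A.IsHermitian) :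
    A.PosSemidef ↔ 0 ≤ A.trace ∧ 0 ≤ A.sumPrincipalMinorsTwo ∧ 0 ≤ A.det := by
  refine ⟨fun h ↦ ⟨h.trace_nonneg, h.sumPrincipalMinorsTwo_nonneg, h.det_nonneg⟩, ?_⟩
  rintro ⟨htr, hminors, hdet⟩
  refine hA.posSemidef_iff_eigenvalues_nonneg.mpr fun i ↦ show (0 : ℝ) ≤ _ from ?_
  set μ := hA.eigenvalues i
  have hroot : A.charpoly.eval μ = 0 := by
    rw [hA.charpoly_eq, Polynomial.eval_prod]
    exact Finset.prod_eq_zero (Finset.mem_univ i) (by simp [μ])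
  rw [eval_charpoly_fin_three] at hroot
  by_contra! hneg
  have hcube : μ ^ 3 < 0 := Odd.pow_neg (by decide) hneg
  have hquad : 0 ≤ A.trace * μ ^ 2 := by positivity
  have hlin : A.sumPrincipalMinorsTwo * μ ≤ 0 := mul_nonpos_of_nonneg_of_nonpos hminors hneg.le
  linarith

end Matrix

theorem qutrit_rice_dumpling_eq (x y z : ℝ) :
    (1/3 : ℝ) • (1 : Matrix (Fin 3) (Fin 3) ℝ) + (1/2 : ℝ) • (x • lam1 + y • lam4 + z • lam6) =
      !![1/3, x/2, y/2; x/2, 1/3, z/2; y/2, z/2, 1/3] := by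
  ext i j
  fin_cases i <;> fin_cases j <;> simp [lam1, lam4, lam6, one_apply] <;> ring

theorem qutrit_rice_dumpling_psd_iff (x y z : ℝ) :
    ((1/3 : ℝ) • (1 : Matrix (Fin 3) (Fin 3) ℝ) +
      (1/2 : ℝ) • (x • lam1 + y • lam4 + z • lam6)).PosSemidef ↔
      x^2 + y^2 + z^2 - 3*x*y*z ≤ 4/9 ∧ x^2 + y^2 + z^2 ≤ 4/3 := by
  set A : Matrix (Fin 3) (Fin 3) ℝ := !![1/3, x/2, y/2; x/2, 1/3, z/2; y/2, z/2, 1/3]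
  have hA : A.IsHermitian := by
    ext i j
    fin_cases i <;> fin_cases j <;> simp [A]
  have htrace : A.trace = 1 := by
    rw [trace_fin_three_of]; norm_num
  have hminors : A.sumPrincipalMinorsTwo = (4/3 - (x^2 + y^2 + z^2)) / 4 := by
    simp only [sumPrincipalMinorsTwo, A, of_apply, cons_val', cons_val_zero, cons_val_one, cons_val,
      cons_val_fin_one]
    ring
  have hdet : A.det = (4/9 - (x^2 + y^2 + z^2 - 3*x*y*z)) / 12 := by
    simp only [det_fin_three, A, of_apply, cons_val', cons_val_zero, cons_val_one, cons_val,
      cons_val_fin_one]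
    ring
  rw [qutrit_rice_dumpling_eq, hA.posSemidef_iff_fin_three, htrace, hminors, hdet]
  constructor
  · rintro ⟨-, hminors_nonneg, hdet_nonneg⟩
    exact ⟨by linarith, by linarith⟩
  · rintro ⟨hcubic, hnorm⟩
    exact ⟨zero_le_one, by linarith, by linarith⟩
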